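/- Let n be a positive integer and let ρ and σ be n×n positive definite complex matrices with trace 1. For every n×n unitary matrix U one has Tr(ρ² (U*σU)⁻¹) ≤ Σ_{i=1}^n λ↓ᵢ(ρ)² / λ↑ᵢ(σ), and equality holds for U = W↑ V↓*. Consequently the maximum of U ↦ Tr(ρ² (U*σU)⁻¹) over the unitary group is Σ_{i=1}^n λ↓ᵢ(ρ)² / λ↑ᵢ(σ) and it is attained at W↑ V↓*. -/

import Mathlib

/-!
Diagonalize `ρ = V diag(r) V*` and `σ = W diag(e) W*`. Then
`Tr(ρ² (U*σU)⁻¹) = Σᵢⱼ rᵢ² eⱼ⁻¹ |Mᵢⱼ|²` with `M = V* U* W` unitary, so `(|Mᵢⱼ|²)` is doubly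
stochastic. By Birkhoff's theorem the right-hand side is a convex combination of the sums
`Σᵢ rᵢ² e_{π i}⁻¹` over permutations `π`, each of which is at most `Σᵢ rᵢ² eᵢ⁻¹` by the
rearrangement inequality, as `r²` and `e⁻¹` are similarly ordered. For `U = W V*` one gets
`M = 1`, and the bound is attained.
-/

open Matrix
open scoped ComplexOrder

variable {ι : Type*} [Fintype ι] [DecidableEq ι]

theorem Monovary.dotProduct_mulVec_le_of_mem_doublyStochastic {R : Type*} [Field R] [LinearOrder R]
    [IsStrictOrderedRing R] {a b : ι → R} (hab : Monovary a b)
    {D : Matrix ι ι R} (hD : D ∈ doublyStochastic R ι) : a ⬝ᵥ D *ᵥ b ≤ a ⬝ᵥ b := by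
  rw [← SetLike.mem_coe, doublyStochastic_eq_convexHull_permMatrix] at hD
  refine convexHull_min (t := {D | a ⬝ᵥ D *ᵥ b ≤ a ⬝ᵥ b}) ?_ (convex_halfSpace_le ?_ _) hD
  · rintro _ ⟨τ, rfl⟩
    simpa [permMatrix_mulVec, dotProduct] using hab.sum_mul_comp_perm_le_sum_mul
  · exact ⟨fun D₁ D₂ => by simp [add_mulVec, dotProduct_add],
      fun c D => by simp [smul_mulVec]⟩

namespace Matrix

variable {𝕜 : Type*} [RCLike 𝕜]

theorem sum_norm_sq_eq_one_of_mul_conjTranspose_eq_one {U : Matrix ι ι 𝕜} (hU : U * Uᴴ = 1)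
    (i : ι) : ∑ j, ‖U i j‖ ^ 2 = 1 := by
  have := congrFun (congrFun hU i) i
  simp only [mul_apply, conjTranspose_apply, one_apply_eq, RCLike.star_def, RCLike.mul_conj] at this
  exact_mod_cast this

theorem norm_sq_mem_doublyStochastic {U : Matrix ι ι 𝕜} (hU : U ∈ unitaryGroup ι 𝕜) :
    (of fun i j => ‖U i j‖ ^ 2) ∈ doublyStochastic ℝ ι := by
  rw [mem_doublyStochastic_iff_sum]
  have hUstar : Uᴴ * Uᴴᴴ = 1 := by
    rw [conjTranspose_conjTranspose]
    exact mem_unitaryGroup_iff'.mp hU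
  refine ⟨fun i j => sq_nonneg _,
    sum_norm_sq_eq_one_of_mul_conjTranspose_eq_one (mem_unitaryGroup_iff.mp hU), fun j => ?_⟩
  simpa using sum_norm_sq_eq_one_of_mul_conjTranspose_eq_one hUstar j

theorem trace_diagonal_mul_mul_diagonal_mul_conjTranspose (a b : ι → ℝ) (M : Matrix ι ι 𝕜) :
    (diagonal (fun i => (a i : 𝕜)) * M * diagonal (fun i => (b i : 𝕜)) * Mᴴ).trace
      = ((a ⬝ᵥ (of fun i j => ‖M i j‖ ^ 2) *ᵥ b : ℝ) : 𝕜) := by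
  simp only [trace, diag, mul_apply (N := Mᴴ), mul_diagonal, diagonal_mul, conjTranspose_apply,
    dotProduct, mulVec, of_apply, Finset.mul_sum]
  push_cast
  refine Finset.sum_congr rfl fun i _ => Finset.sum_congr rfl fun j _ => ?_
  rw [← RCLike.mul_conj, RCLike.star_def]
  ring

theorem re_trace_diagonal_mul_mul_diagonal_mul_conjTranspose_le {a b : ι → ℝ}
    (hab : Monovary a b) {M : Matrix ι ι 𝕜} (hM : M ∈ unitaryGroup ι 𝕜) :
    RCLike.re (diagonal (fun i => (a i : 𝕜)) * M * diagonal (fun i => (b i : 𝕜)) * Mᴴ).trace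
      ≤ a ⬝ᵥ b := by
  rw [trace_diagonal_mul_mul_diagonal_mul_conjTranspose, RCLike.ofReal_re]
  exact hab.dotProduct_mulVec_le_of_mem_doublyStochastic (norm_sq_mem_doublyStochastic hM)

section Unitary

variable {K : Type*} [CommRing K] [StarRing K] {U : Matrix ι ι K}

theorem eq_mul_mul_conjTranspose_of_conjTranspose_mul_mul_eq (hU : U ∈ unitaryGroup ι K)
    {A D : Matrix ι ι K} (h : Uᴴ * A * U = D) : A = U * D * Uᴴ := by
  have h₁ : U * Uᴴ = 1 := mem_unitaryGroup_iff.mp hU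
  rw [← h, ← mul_assoc, ← mul_assoc, h₁, one_mul, mul_assoc, h₁, mul_one]

theorem inv_conjTranspose_mul_mul_of_mem_unitaryGroup (hU : U ∈ unitaryGroup ι K)
    (A : Matrix ι ι K) : (Uᴴ * A * U)⁻¹ = Uᴴ * A⁻¹ * U := by
  have h₁ : Uᴴ * U = 1 := mem_unitaryGroup_iff'.mp hU
  have h₂ : U * Uᴴ = 1 := mem_unitaryGroup_iff.mp hU
  rw [Matrix.mul_inv_rev, Matrix.mul_inv_rev, inv_eq_left_inv h₁, inv_eq_left_inv h₂, mul_assoc]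

theorem trace_sq_mul_inv_conjTranspose_mul_mul {ρ σ V W R E : Matrix ι ι K}
    (hU : U ∈ unitaryGroup ι K) (hV : V ∈ unitaryGroup ι K) (hW : W ∈ unitaryGroup ι K)
    (hVρ : Vᴴ * ρ * V = R) (hWσ : Wᴴ * σ * W = E) :
    (ρ ^ 2 * (Uᴴ * σ * U)⁻¹).trace
      = (R ^ 2 * (Vᴴ * Uᴴ * W) * E⁻¹ * (Vᴴ * Uᴴ * W)ᴴ).trace := by
  have hV₁ : Vᴴ * V = 1 := mem_unitaryGroup_iff'.mp hV
  have hρ : ρ ^ 2 = V * R ^ 2 * Vᴴ := by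
    rw [eq_mul_mul_conjTranspose_of_conjTranspose_mul_mul_eq hV hVρ, sq, sq]
    simp only [mul_assoc, ← mul_assoc Vᴴ V, hV₁, one_mul]
  have hσ : σ⁻¹ = W * E⁻¹ * Wᴴ := by
    have hW' : Wᴴ ∈ unitaryGroup ι K := Unitary.star_mem hW
    rw [eq_mul_mul_conjTranspose_of_conjTranspose_mul_mul_eq hW hWσ]
    simpa using inv_conjTranspose_mul_mul_of_mem_unitaryGroup hW' E
  rw [inv_conjTranspose_mul_mul_of_mem_unitaryGroup hU, hσ, hρ, mul_assoc V, mul_assoc V,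
    trace_mul_comm V]
  simp only [conjTranspose_mul, conjTranspose_conjTranspose, mul_assoc]

end Unitary

theorem inv_diagonal_of_ne_zero {K : Type*} [Field K] {d : ι → K} (hd : ∀ i, d i ≠ 0) :
    (diagonal d)⁻¹ = diagonal d⁻¹ :=
  inv_eq_left_inv <| by
    rw [diagonal_mul_diagonal, ← diagonal_one]
    exact congrArg diagonal (funext fun i => inv_mul_cancel₀ (hd i))

theorem PosDef.pos_of_conjTranspose_mul_mul_eq_diagonal {A U : Matrix ι ι 𝕜} {d : ι → ℝ}
    (hA : A.PosDef) (hU : U ∈ unitaryGroup ι 𝕜)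
    (h : Uᴴ * A * U = diagonal (fun i => (d i : 𝕜))) (i : ι) : 0 < d i := by
  have := hA.conjTranspose_mul_mul_same
    (mulVec_injective_of_isUnit (Unitary.isUnit_coe (U := ⟨U, hU⟩)))
  rw [h, posDef_diagonal_iff] at this
  exact_mod_cast this i

end Matrix

theorem stmt1_general (n : ℕ)
    (ρ σ : Matrix (Fin n) (Fin n) ℂ)
    (hρ : ρ.PosDef) (hσ : σ.PosDef)
    (r e : Fin n → ℝ) (hr : Antitone r) (he : Monotone e)
    (V W : Matrix (Fin n) (Fin n) ℂ)
    (hV : V ∈ Matrix.unitaryGroup (Fin n) ℂ)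
    (hW : W ∈ Matrix.unitaryGroup (Fin n) ℂ)
    (hVρ : Vᴴ * ρ * V = Matrix.diagonal (fun i => (r i : ℂ)))
    (hWσ : Wᴴ * σ * W = Matrix.diagonal (fun i => (e i : ℂ))) :
    (∀ U ∈ Matrix.unitaryGroup (Fin n) ℂ,
        ((ρ ^ 2 * (Uᴴ * σ * U)⁻¹).trace).re ≤ ∑ i, r i ^ 2 / e i) ∧
    (ρ ^ 2 * ((W * Vᴴ)ᴴ * σ * (W * Vᴴ))⁻¹).trace = ((∑ i, r i ^ 2 / e i : ℝ) : ℂ) := by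
  have hr₀ i : 0 ≤ r i := (hρ.pos_of_conjTranspose_mul_mul_eq_diagonal hV hVρ i).le
  have he₀ := hσ.pos_of_conjTranspose_mul_mul_eq_diagonal hW hWσ
  have hmono : Monovary (fun i => r i ^ 2) (fun i => (e i)⁻¹) := fun i j hij =>
    pow_le_pow_left₀ (hr₀ i) (hr (he.reflect_lt ((inv_lt_inv₀ (he₀ i) (he₀ j)).mp hij)).le) 2
  have htrace : ∀ U ∈ unitaryGroup (Fin n) ℂ, (ρ ^ 2 * (Uᴴ * σ * U)⁻¹).trace
      = (diagonal (fun i => ((r i ^ 2 : ℝ) : ℂ)) * (Vᴴ * Uᴴ * W)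
          * diagonal (fun i => (((e i)⁻¹ : ℝ) : ℂ)) * (Vᴴ * Uᴴ * W)ᴴ).trace := by
    intro U hU
    rw [trace_sq_mul_inv_conjTranspose_mul_mul hU hV hW hVρ hWσ, diagonal_pow,
      inv_diagonal_of_ne_zero fun i => Complex.ofReal_ne_zero.mpr (he₀ i).ne']
    push_cast
    rfl
  refine ⟨fun U hU => ?_, ?_⟩
  · rw [htrace U hU]
    exact re_trace_diagonal_mul_mul_diagonal_mul_conjTranspose_le hmono
      (mul_mem (mul_mem (Unitary.star_mem hV) (Unitary.star_mem hU)) hW)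
  · have hWV : W * Vᴴ ∈ unitaryGroup (Fin n) ℂ := mul_mem hW (Unitary.star_mem hV)
    have hM : Vᴴ * (W * Vᴴ)ᴴ * W = 1 := by
      have hV₁ : Vᴴ * V = 1 := mem_unitaryGroup_iff'.mp hV
      have hW₁ : Wᴴ * W = 1 := mem_unitaryGroup_iff'.mp hW
      rw [conjTranspose_mul, conjTranspose_conjTranspose, ← mul_assoc, hV₁, one_mul, hW₁]
    rw [htrace _ hWV, hM, mul_one, conjTranspose_one, mul_one,
      diagonal_mul_diagonal, trace_diagonal]
    push_cast [div_eq_mul_inv]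
    rfl

/-- For faithful quantum states `ρ, σ`, with `r = λ↓(ρ)` and `e = λ↑(σ)`,
for every unitary `U`, `Tr(ρ² (U*σU)⁻¹) ≤ Σᵢ r i ^ 2 / e i`, with equality at
`U = W↑ V↓*`; hence this value is the maximum over the unitary group. -/
theorem stmt1 (n : ℕ) (hn : 0 < n)
    (ρ σ : Matrix (Fin n) (Fin n) ℂ)
    (hρ : ρ.PosDef) (hσ : σ.PosDef)
    (hρtr : ρ.trace = 1) (hσtr : σ.trace = 1)
    (r e : Fin n → ℝ) (hr : Antitone r) (he : Monotone e)
    (V W : Matrix (Fin n) (Fin n) ℂ)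
    (hV : V ∈ Matrix.unitaryGroup (Fin n) ℂ)
    (hW : W ∈ Matrix.unitaryGroup (Fin n) ℂ)
    (hVρ : Vᴴ * ρ * V = Matrix.diagonal (fun i => (r i : ℂ)))
    (hWσ : Wᴴ * σ * W = Matrix.diagonal (fun i => (e i : ℂ))) :
    (∀ U ∈ Matrix.unitaryGroup (Fin n) ℂ,
        ((ρ ^ 2 * (Uᴴ * σ * U)⁻¹).trace).re ≤ ∑ i, r i ^ 2 / e i) ∧
    (ρ ^ 2 * ((W * Vᴴ)ᴴ * σ * (W * Vᴴ))⁻¹).trace = ((∑ i, r i ^ 2 / e i : ℝ) : ℂ) :=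
  stmt1_general n ρ σ hρ hσ r e hr he V W hV hW hVρ hWσ
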